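/- Let 0 < s ≤ 1, let D ⊂ ℝ^d be a bounded set, let μ be a Borel probability measure on ℝ^d supported on D, and let P_n = {x₁, …, x_n} ⊂ D be a finite set of n distinct points. Then there exist constants c, C > 0 depending only on D (and not on μ, n or P_n) such that c·D_{μ,P_n,s} ≤ inf over weight vectors a ∈ ℝⁿ of sup over functions f : D → ℝ with sup_{x∈D}|f(x)| + sup_{x≠y, x,y∈D} |f(x) − f(y)|/‖x − y‖₂^s ≤ 1 of |∫ f dμ − ∑_{i=1}^n a_i f(x_i)| ≤ C·D_{μ,P_n,s}. Moreover, the upper bound is attained (up to the constant C) by the Voronoi weights a_i = μ(C_i), for any measurable partition C₁, …, C_n of ℝ^d with C_i ⊆ { x : ‖x − x_i‖₂ = dist(x, P_n) } for each i. -/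

import Mathlib

open MeasureTheory
open scoped ENNReal NNReal

noncomputable section

/-- `f` has `C^s(D)`-norm at most one (Lipschitz norm for `s = 1`): the sum of its sup-norm
over `D` and its `s`-Hölder seminorm over `D` is at most `1`. -/
def HolderNormLEOne {d : ℕ} (s : ℝ) (D : Set (EuclideanSpace ℝ (Fin d)))
    (f : EuclideanSpace ℝ (Fin d) → ℝ) : Prop :=
  ∃ A B : ℝ, 0 ≤ A ∧ 0 ≤ B ∧ A + B ≤ 1 ∧ (∀ y ∈ D, |f y| ≤ A) ∧
    ∀ y ∈ D, ∀ z ∈ D, y ≠ z → |f y - f z| ≤ B * dist y z ^ s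

/-- The set of absolute integration errors of the cubature rule with nodes `x` and
weights `a`, over measurable functions with `C^s(D)`-norm at most one. -/
def errSet {d n : ℕ} (s : ℝ) (D : Set (EuclideanSpace ℝ (Fin d)))
    (μ : Measure (EuclideanSpace ℝ (Fin d))) (x : Fin n → EuclideanSpace ℝ (Fin d))
    (a : Fin n → ℝ) : Set ℝ :=
  {e : ℝ | ∃ f : EuclideanSpace ℝ (Fin d) → ℝ, Measurable f ∧ HolderNormLEOne s D f ∧
    e = |(∫ y, f y ∂μ) - ∑ i, a i * f (x i)|}

/-!
Lower bound: the distortion function `y ↦ dist(y, P_n)^s`, divided by `max (diam D) 1 + 1`, lies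
in the unit ball of `C^s(D)` and vanishes at every node, so every cubature rule assigns it the value
zero, erring by a fixed multiple of the distortion.

Upper bound: with Voronoi weights the error splits over the cells as `∑ᵢ ∫_{Cᵢ} (f - f(xᵢ)) dμ`,
and on `Cᵢ` the Hölder bound gives `|f(y) - f(xᵢ)| ≤ ‖y - xᵢ‖^s = dist(y, P_n)^s`. A Voronoi
partition exists: disjointify the closed nearest-node cells along the order of the nodes.
-/

open Metric Set

theorem abs_rpow_sub_rpow_le {a b s : ℝ} (ha : 0 ≤ a) (hb : 0 ≤ b) (hs : 0 ≤ s) (hs1 : s ≤ 1) :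
    |a ^ s - b ^ s| ≤ |a - b| ^ s := by
  wlog hba : b ≤ a generalizing a b
  · rw [abs_sub_comm, abs_sub_comm a b]
    exact this hb ha (le_of_not_ge hba)
  have hsub := Real.rpow_add_le_add_rpow hb (sub_nonneg.2 hba) hs hs1
  rw [add_sub_cancel] at hsub
  rw [abs_of_nonneg (sub_nonneg.2 hba),
    abs_of_nonneg (sub_nonneg.2 (Real.rpow_le_rpow hb hba hs))]
  linarith

section InfDist

variable {X : Type*} [PseudoMetricSpace X] {s : ℝ}

theorem abs_infDist_rpow_sub_le (A : Set X) (hs : 0 ≤ s) (hs1 : s ≤ 1) (y z : X) :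
    |infDist y A ^ s - infDist z A ^ s| ≤ dist y z ^ s := by
  have hlip : |infDist y A - infDist z A| ≤ dist y z := by
    simpa [Real.dist_eq] using (lipschitz_infDist_pt A).dist_le_mul y z
  exact (abs_rpow_sub_rpow_le infDist_nonneg infDist_nonneg hs hs1).trans
    (Real.rpow_le_rpow (abs_nonneg _) hlip hs)

theorem infDist_rpow_le_max_diam_one {D A : Set X} (hD : Bornology.IsBounded D) (hAD : A ⊆ D)
    (hA : A.Nonempty) (hs : 0 ≤ s) (hs1 : s ≤ 1) {y : X} (hy : y ∈ D) :
    infDist y A ^ s ≤ max (diam D) 1 := by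
  obtain ⟨a, ha⟩ := hA
  have hyA : infDist y A ≤ max (diam D) 1 :=
    ((infDist_le_dist_of_mem ha).trans (dist_le_diam_of_mem hD hy (hAD ha))).trans
      (le_max_left _ _)
  calc infDist y A ^ s ≤ max (diam D) 1 ^ s := Real.rpow_le_rpow infDist_nonneg hyA hs
    _ ≤ max (diam D) 1 ^ (1 : ℝ) := Real.rpow_le_rpow_of_exponent_le (le_max_right _ _) hs1
    _ = max (diam D) 1 := Real.rpow_one _

theorem integrable_infDist_rpow [MeasurableSpace X] [OpensMeasurableSpace X] {μ : Measure X}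
    [IsFiniteMeasure μ] {D A : Set X} (hD : Bornology.IsBounded D) (hAD : A ⊆ D)
    (hA : A.Nonempty) (hμD : μ Dᶜ = 0) (hs : 0 ≤ s) (hs1 : s ≤ 1) :
    Integrable (fun y => infDist y A ^ s) μ := by
  have hD_ae : ∀ᵐ y ∂μ, y ∈ D := mem_ae_iff.2 hμD
  refine (integrable_const (max (diam D) 1)).mono'
    ((continuous_infDist_pt A).measurable.pow_const s).aestronglyMeasurable <|
    hD_ae.mono fun y hy => ?_
  rw [Real.norm_eq_abs, abs_of_nonneg (Real.rpow_nonneg infDist_nonneg s)]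
  exact infDist_rpow_le_max_diam_one hD hAD hA hs hs1 hy

theorem exists_voronoi_partition [MeasurableSpace X] [OpensMeasurableSpace X] {n : ℕ}
    (hn : 0 < n) (x : Fin n → X) :
    ∃ V : Fin n → Set X, (∀ i, MeasurableSet (V i)) ∧ Pairwise (Function.onFun Disjoint V) ∧
      (⋃ i, V i) = univ ∧ ∀ i, V i ⊆ {y | dist y (x i) = infDist y (range x)} := by
  set W : Fin n → Set X := fun i => ⋂ j, {y | dist y (x i) ≤ dist y (x j)}
  have hWm : ∀ i, MeasurableSet (W i) := fun i => MeasurableSet.iInter fun j =>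
    measurableSet_le (continuous_id.dist continuous_const).measurable
      (continuous_id.dist continuous_const).measurable
  refine ⟨disjointed W, fun i => ?_, disjoint_disjointed W, ?_, fun i y hy => ?_⟩
  · rw [disjointed_eq_inf_compl]
    exact (hWm i).inter (MeasurableSet.iInter fun j => MeasurableSet.iInter fun _ => (hWm j).compl)
  · rw [← iSup_eq_iUnion, iSup_disjointed, iSup_eq_iUnion, eq_univ_iff_forall]
    intro y
    obtain ⟨i, -, hi⟩ := Finset.univ.exists_min_image (fun i => dist y (x i))
      ⟨⟨0, hn⟩, Finset.mem_univ _⟩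
    exact mem_iUnion.2 ⟨i, mem_iInter.2 fun j => hi j (Finset.mem_univ j)⟩
  · obtain ⟨_, ⟨j, rfl⟩, hj⟩ := (finite_range x).isCompact.exists_infDist_eq_dist
      ⟨x ⟨0, hn⟩, _, rfl⟩ y
    exact le_antisymm (hj ▸ mem_iInter.1 (disjointed_le W i hy) j)
      (infDist_le_dist_of_mem ⟨i, rfl⟩)

end InfDist

section Cubature

variable {d n : ℕ} {s : ℝ} {D : Set (EuclideanSpace ℝ (Fin d))}
  {μ : Measure (EuclideanSpace ℝ (Fin d))} {x : Fin n → EuclideanSpace ℝ (Fin d)}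
  {f : EuclideanSpace ℝ (Fin d) → ℝ}

theorem HolderNormLEOne.abs_le_one (hf : HolderNormLEOne s D f) {y} (hy : y ∈ D) :
    |f y| ≤ 1 := by
  obtain ⟨A, B, -, hB, hAB, hfA, -⟩ := hf
  linarith [hfA y hy]

theorem HolderNormLEOne.abs_sub_le (hf : HolderNormLEOne s D f)
    {y z : EuclideanSpace ℝ (Fin d)} (hy : y ∈ D) (hz : z ∈ D) : |f y - f z| ≤ dist y z ^ s := by
  obtain ⟨A, B, hA, hB, hAB, -, hfB⟩ := hf
  rcases eq_or_ne y z with rfl | hyz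
  · rw [sub_self, abs_zero]
    exact Real.rpow_nonneg dist_nonneg s
  · exact (hfB y hy z hz hyz).trans
      (mul_le_of_le_one_left (Real.rpow_nonneg dist_nonneg s) (by linarith))

theorem HolderNormLEOne.ae_abs_le_one (hf : HolderNormLEOne s D f) (hμD : μ Dᶜ = 0) :
    ∀ᵐ y ∂μ, |f y| ≤ 1 := by
  have hD_ae : ∀ᵐ y ∂μ, y ∈ D := mem_ae_iff.2 hμD
  exact hD_ae.mono fun _ => hf.abs_le_one

theorem HolderNormLEOne.integrable [IsFiniteMeasure μ] (hμD : μ Dᶜ = 0) (hfm : Measurable f)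
    (hf : HolderNormLEOne s D f) : Integrable f μ :=
  (integrable_const (1 : ℝ)).mono' hfm.aestronglyMeasurable (hf.ae_abs_le_one hμD)

theorem holderNormLEOne_inv_mul {A B : ℝ} (hA : 0 ≤ A) (hB : 0 ≤ B) (hAB : 0 < A + B)
    (hfA : ∀ y ∈ D, |f y| ≤ A) (hfB : ∀ y ∈ D, ∀ z ∈ D, |f y - f z| ≤ B * dist y z ^ s) :
    HolderNormLEOne s D fun y => (A + B)⁻¹ * f y := by
  have hc : 0 ≤ (A + B)⁻¹ := inv_nonneg.2 hAB.le
  refine ⟨(A + B)⁻¹ * A, (A + B)⁻¹ * B, by positivity, by positivity,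
    by rw [← mul_add, inv_mul_cancel₀ hAB.ne'], fun y hy => ?_, fun y hy z hz _ => ?_⟩
  · rw [abs_mul, abs_of_nonneg hc]
    exact mul_le_mul_of_nonneg_left (hfA y hy) hc
  · rw [← mul_sub, abs_mul, abs_of_nonneg hc, mul_assoc]
    exact mul_le_mul_of_nonneg_left (hfB y hy z hz) hc

theorem zero_mem_errSet (a : Fin n → ℝ) : (0 : ℝ) ∈ errSet s D μ x a :=
  ⟨0, measurable_const, ⟨0, 0, le_rfl, le_rfl, by norm_num, by simp, by simp⟩, by simp⟩

theorem bddAbove_errSet [IsProbabilityMeasure μ] (hμD : μ Dᶜ = 0) (hxD : ∀ i, x i ∈ D)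
    (a : Fin n → ℝ) : BddAbove (errSet s D μ x a) := by
  refine ⟨1 + ∑ i, |a i|, ?_⟩
  rintro _ ⟨f, -, hf : HolderNormLEOne s D f, rfl⟩
  have hint : |∫ y, f y ∂μ| ≤ 1 := by
    simpa using norm_integral_le_of_norm_le_const (μ := μ) (f := f) (C := 1)
      (by simpa only [Real.norm_eq_abs] using hf.ae_abs_le_one hμD)
  have hsum : |∑ i, a i * f (x i)| ≤ ∑ i, |a i| :=
    (Finset.abs_sum_le_sum_abs _ _).trans <| Finset.sum_le_sum fun i _ => by
      rw [abs_mul]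
      exact mul_le_of_le_one_right (abs_nonneg _) (hf.abs_le_one (hxD i))
  exact (abs_sub _ _).trans (add_le_add hint hsum)

theorem abs_integral_le_sSup_errSet [IsProbabilityMeasure μ] (hμD : μ Dᶜ = 0)
    (hxD : ∀ i, x i ∈ D) (hfm : Measurable f) (hf : HolderNormLEOne s D f)
    (hfx : ∀ i, f (x i) = 0) (a : Fin n → ℝ) : |∫ y, f y ∂μ| ≤ sSup (errSet s D μ x a) :=
  le_csSup (bddAbove_errSet hμD hxD a) ⟨f, hfm, hf, by simp [hfx]⟩

theorem abs_integral_sub_voronoi_sum_le [IsFiniteMeasure μ] (hμD : μ Dᶜ = 0)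
    (hxD : ∀ i, x i ∈ D) {V : Fin n → Set (EuclideanSpace ℝ (Fin d))}
    (hVm : ∀ i, MeasurableSet (V i)) (hVd : Pairwise (Function.onFun Disjoint V))
    (hVu : (⋃ i, V i) = univ) (hVx : ∀ i, V i ⊆ {y | dist y (x i) = infDist y (range x)})
    (hg : Integrable (fun y => infDist y (range x) ^ s) μ) (hfm : Measurable f)
    (hf : HolderNormLEOne s D f) :
    |(∫ y, f y ∂μ) - ∑ i, (μ (V i)).toReal * f (x i)| ≤ ∫ y, infDist y (range x) ^ s ∂μ := by
  have hfV : ∀ i, IntegrableOn f (V i) μ := fun i => (hf.integrable hμD hfm).integrableOn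
  have hsplit : (∫ y, f y ∂μ) - ∑ i, (μ (V i)).toReal * f (x i) =
      ∑ i, ∫ y in V i, (f y - f (x i)) ∂μ := by
    rw [← setIntegral_univ, ← hVu, integral_iUnion_fintype hVm hVd hfV, ← Finset.sum_sub_distrib]
    refine Finset.sum_congr rfl fun i _ => ?_
    rw [integral_sub (hfV i) (integrableOn_const ..), setIntegral_const, smul_eq_mul,
      measureReal_def]
  have hcell : ∀ i, |∫ y in V i, (f y - f (x i)) ∂μ| ≤ ∫ y in V i, infDist y (range x) ^ s ∂μ :=
    fun i => norm_integral_le_of_norm_le hg.integrableOn <| by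
      filter_upwards [ae_restrict_mem (hVm i), ae_restrict_of_ae (mem_ae_iff.2 hμD)]
        with y hyV hyD
      rw [Real.norm_eq_abs, ← hVx i hyV]
      exact hf.abs_sub_le hyD (hxD i)
  calc _ = |∑ i, ∫ y in V i, (f y - f (x i)) ∂μ| := by rw [hsplit]
    _ ≤ ∑ i, |∫ y in V i, (f y - f (x i)) ∂μ| := Finset.abs_sum_le_sum_abs _ _
    _ ≤ ∑ i, ∫ y in V i, infDist y (range x) ^ s ∂μ := Finset.sum_le_sum fun i _ => hcell i
    _ = ∫ y, infDist y (range x) ^ s ∂μ := by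
      rw [← integral_iUnion_fintype hVm hVd fun i => hg.integrableOn, hVu, setIntegral_univ]

theorem sSup_errSet_voronoi_le [IsFiniteMeasure μ] (hμD : μ Dᶜ = 0)
    (hxD : ∀ i, x i ∈ D) {V : Fin n → Set (EuclideanSpace ℝ (Fin d))}
    (hVm : ∀ i, MeasurableSet (V i)) (hVd : Pairwise (Function.onFun Disjoint V))
    (hVu : (⋃ i, V i) = univ) (hVx : ∀ i, V i ⊆ {y | dist y (x i) = infDist y (range x)})
    (hg : Integrable (fun y => infDist y (range x) ^ s) μ) :
    sSup (errSet s D μ x fun i => (μ (V i)).toReal) ≤ ∫ y, infDist y (range x) ^ s ∂μ :=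
  csSup_le ⟨0, zero_mem_errSet _⟩ fun _ ⟨_, hfm, hf, he⟩ =>
    he ▸ abs_integral_sub_voronoi_sum_le hμD hxD hVm hVd hVu hVx hg hfm hf

theorem inv_mul_integral_infDist_rpow_le_sSup_errSet [IsProbabilityMeasure μ]
    (hD : Bornology.IsBounded D) (hμD : μ Dᶜ = 0) (hn : 0 < n) (hxD : ∀ i, x i ∈ D)
    (hs : 0 < s) (hs1 : s ≤ 1) (a : Fin n → ℝ) :
    (max (diam D) 1 + 1)⁻¹ * ∫ y, infDist y (range x) ^ s ∂μ ≤ sSup (errSet s D μ x a) := by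
  have hbound : ∀ y ∈ D, |infDist y (range x) ^ s| ≤ max (diam D) 1 := fun y hy => by
    rw [abs_of_nonneg (Real.rpow_nonneg infDist_nonneg s)]
    exact infDist_rpow_le_max_diam_one hD (range_subset_iff.2 hxD) ⟨_, mem_range_self ⟨0, hn⟩⟩
      hs.le hs1 hy
  have hholder := holderNormLEOne_inv_mul (by positivity) zero_le_one (by positivity) hbound
    fun y _ z _ => (one_mul (dist y z ^ s)).symm ▸ abs_infDist_rpow_sub_le _ hs.le hs1 y z
  have hnodes : ∀ i, (max (diam D) 1 + 1)⁻¹ * infDist (x i) (range x) ^ s = 0 := fun i => by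
    rw [infDist_zero_of_mem (mem_range_self i), Real.zero_rpow hs.ne', mul_zero]
  have hle := abs_integral_le_sSup_errSet hμD hxD
    (((continuous_infDist_pt _).measurable.pow_const s).const_mul _) hholder hnodes a
  rwa [integral_const_mul, abs_of_nonneg (mul_nonneg (by positivity)
    (integral_nonneg fun _ => Real.rpow_nonneg infDist_nonneg s))] at hle

end Cubature

theorem stmt14 (d : ℕ) (D : Set (EuclideanSpace ℝ (Fin d)))
    (hbd : Bornology.IsBounded D) :
    ∃ c C : ℝ, 0 < c ∧ 0 < C ∧
      ∀ s : ℝ, 0 < s → s ≤ 1 →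
      ∀ μ : Measure (EuclideanSpace ℝ (Fin d)), IsProbabilityMeasure μ → μ Dᶜ = 0 →
      ∀ n : ℕ, 1 ≤ n → ∀ x : Fin n → EuclideanSpace ℝ (Fin d),
        Function.Injective x → (∀ i, x i ∈ D) →
        -- two-sided bound by the distortion for the minimal worst-case error:
        (c * (∫ y, Metric.infDist y (Set.range x) ^ s ∂μ) ≤
            sInf {r : ℝ | ∃ a : Fin n → ℝ, r = sSup (errSet s D μ x a)} ∧
          sInf {r : ℝ | ∃ a : Fin n → ℝ, r = sSup (errSet s D μ x a)} ≤
            C * (∫ y, Metric.infDist y (Set.range x) ^ s ∂μ)) ∧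
        -- the upper bound is attained (up to the constant C) by the Voronoi weights:
        ∀ V : Fin n → Set (EuclideanSpace ℝ (Fin d)),
          (∀ i, MeasurableSet (V i)) →
          (Pairwise (Function.onFun Disjoint V)) →
          (⋃ i, V i) = Set.univ →
          (∀ i, V i ⊆ {y | dist y (x i) = Metric.infDist y (Set.range x)}) →
          sSup (errSet s D μ x (fun i => (μ (V i)).toReal)) ≤
            C * (∫ y, Metric.infDist y (Set.range x) ^ s ∂μ) := by
  refine ⟨(max (diam D) 1 + 1)⁻¹, 1, by positivity, one_pos, ?_⟩
  intro s hs hs1 μ _ hμD n hn x _ hxD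
  have hg : Integrable (fun y => infDist y (range x) ^ s) μ :=
    integrable_infDist_rpow hbd (range_subset_iff.2 hxD) ⟨_, mem_range_self ⟨0, hn⟩⟩ hμD hs.le hs1
  have hvoronoi : ∀ V : Fin n → Set (EuclideanSpace ℝ (Fin d)), (∀ i, MeasurableSet (V i)) →
      Pairwise (Function.onFun Disjoint V) → (⋃ i, V i) = univ →
      (∀ i, V i ⊆ {y | dist y (x i) = infDist y (range x)}) →
      sSup (errSet s D μ x fun i => (μ (V i)).toReal) ≤
        1 * ∫ y, infDist y (range x) ^ s ∂μ := fun V hVm hVd hVu hVx =>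
    (one_mul (∫ y, infDist y (range x) ^ s ∂μ)).symm ▸
      sSup_errSet_voronoi_le hμD hxD hVm hVd hVu hVx hg
  have hbdd : BddBelow {r : ℝ | ∃ a : Fin n → ℝ, r = sSup (errSet s D μ x a)} := by
    refine ⟨0, ?_⟩
    rintro _ ⟨a, rfl⟩
    exact le_csSup (bddAbove_errSet hμD hxD a) (zero_mem_errSet a)
  obtain ⟨V, hVm, hVd, hVu, hVx⟩ := exists_voronoi_partition hn x
  refine ⟨⟨le_csInf ⟨_, 0, rfl⟩ ?_, (csInf_le hbdd ⟨_, rfl⟩).trans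
    (hvoronoi V hVm hVd hVu hVx)⟩, hvoronoi⟩
  rintro _ ⟨a, rfl⟩
  exact inv_mul_integral_infDist_rpow_le_sSup_errSet hbd hμD hn hxD hs hs1 a
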